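/- For every integer q ≥ 4 and every proper coloring x ∈ {1,…,q}^n with n ≥ 1, define Q(x) = (1/D(n+1))·∑_{i=1}^n C(2i)·P(x̂_i) and Q*(x) = (1/D(n+1))·∑_{i=1}^n C(2n−2i+2)·P(x̂_i). Then Q(x) = Q*(x) = P(x)·C(n+1). -/

import Mathlib

open Polynomial Polynomial.Chebyshev

/-- `C n = T_{|n|}(√q/2)`; Mathlib's `T` is even in its integer index. -/
noncomputable def C (q : ℝ) (n : ℤ) : ℝ := (T ℝ n).eval (Real.sqrt q / 2)

/-- `D n = √q · U_{n-1}(√q/2)`, the odd extension (`D 0 = 0`). -/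
noncomputable def D (q : ℝ) (n : ℤ) : ℝ := Real.sqrt q * (U ℝ (n - 1)).eval (Real.sqrt q / 2)

/-- A word is a proper coloring if no two consecutive letters are equal. -/
def Proper {q : ℕ} (x : List (Fin q)) : Prop := x.IsChain (· ≠ ·)

instance {q : ℕ} (x : List (Fin q)) : Decidable (Proper x) := by
  unfold Proper; infer_instance

/-- The recursively defined cylinder measure: `P [] = 1`, `P x = 0` for non-proper `x`,
and `P x = (1/D(n+1)) ∑_{i=1}^n C(n-2i+1) P(x̂ᵢ)` for proper `x` of length `n`,
where `x̂ᵢ` deletes the `i`-th letter (here indexed from `0`, so the coefficient of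
`x.eraseIdx i` is `C(n - 2(i+1) + 1) = C(n - 2i - 1)`). -/
noncomputable def P (q : ℕ) : List (Fin q) → ℝ
  | [] => 1
  | a :: l =>
    if Proper (a :: l) then
      (1 / D q (((a :: l).length : ℤ) + 1)) *
        ∑ i : Fin (a :: l).length,
          C q (((a :: l).length : ℤ) - 2 * (i : ℤ) - 1) * P q ((a :: l).eraseIdx i)
    else 0
termination_by x => x.length
decreasing_by
  have := i.isLt
  simp only [List.length_eraseIdx, this, if_pos]
  omega

/-! The weights obey the addition formulas `C(a ± b) = C(a)C(b) ± (q-4)/(4q) D(a)D(b)` and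
`D(a - b) = D(a)C(b) - C(a)D(b)`. Hence both `Q` and `Q*` equal
`C(n+1) ∑ C(n-2i+1) P(x̂ᵢ) = C(n+1) D(n+1) P(x)` as soon as `R(x) = ∑ D(n-2i+1) P(x̂ᵢ)` vanishes.
That is proved by induction on `n`: by the recursion for `P(x̂ᵢ)` and `R(x̂ᵢ) = 0`, the product
`D(n) R(x)` is the sum of `D(2j-2i+1) P((x̂ᵢ)^ⱼ)` over ordered pairs of deleted letters, and
exchanging the order of the two deletions flips the sign of the weight. If `x̂ᵢ` is not proper, then
`x_{i-1} = x_{i+1}`, and only the two deletions of this repeated letter survive, with weights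
`D(∓1)`. The hypothesis `q ≥ 4` keeps `D(n)` positive. -/

open Finset

namespace Polynomial.Chebyshev

variable (R : Type*) [CommRing R]

theorem U_add_sub_one (m n : ℤ) :
    U R (m + n - 1) = U R (m - 1) * T R n + T R m * U R (n - 1) := by
  induction n using Polynomial.Chebyshev.induct with
  | zero => simp
  | one =>
    rw [T_one, sub_self, U_zero]
    linear_combination (norm := ring_nf) U_eq_X_mul_U_add_T R (m - 1)
  | add_two n ih1 ih2 =>
    linear_combination (norm := ring_nf) U_add_two R (m + n - 1) - U R (m - 1) * T_add_two R n
      - T R m * U_add_two R (n - 1) + 2 * (X : R[X]) * ih1 - ih2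
  | neg_add_one n ih1 ih2 =>
    linear_combination (norm := ring_nf)
      U_add_two R (m - n - 2) - U R (m - 1) * T_add_two R (-n - 1)
        - T R m * U_add_two R (-n - 2) + 2 * (X : R[X]) * ih1 - ih2

theorem T_add (m n : ℤ) :
    T R (m + n) = T R m * T R n + (X ^ 2 - 1) * U R (m - 1) * U R (n - 1) := by
  induction n using Polynomial.Chebyshev.induct with
  | zero => simp
  | one =>
    rw [T_one, sub_self, U_zero]
    linear_combination (norm := ring_nf) T_eq_X_mul_T_sub_pol_U R (m - 1)
  | add_two n ih1 ih2 =>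
    linear_combination (norm := ring_nf) T_add_two R (m + n) - T R m * T_add_two R n
      - (X ^ 2 - 1) * U R (m - 1) * U_add_two R (n - 1) + 2 * (X : R[X]) * ih1 - ih2
  | neg_add_one n ih1 ih2 =>
    linear_combination (norm := ring_nf) T_add_two R (m - n - 1) - T R m * T_add_two R (-n - 1)
      - (X ^ 2 - 1) * U R (m - 1) * U_add_two R (-n - 2) + 2 * (X : R[X]) * ih1 - ih2

end Polynomial.Chebyshev

lemma D_zero (q : ℝ) : D q 0 = 0 := by simp [D]

lemma D_neg (q : ℝ) (a : ℤ) : D q (-a) = -D q a := by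
  rw [D, D, U_neg_sub_one, eval_neg, mul_neg]

lemma D_sub (q : ℝ) (a b : ℤ) : D q (a - b) = D q a * C q b - C q a * D q b := by
  have h := congrArg (eval (√q / 2)) (U_add_sub_one ℝ a (-b))
  rw [T_neg, U_neg_sub_one, ← sub_eq_add_neg] at h
  simp only [eval_add, eval_mul, eval_neg] at h
  rw [D, D, D, _root_.C, _root_.C, h]
  ring

lemma C_add {q : ℝ} (hq : 0 < q) (a b : ℤ) :
    C q (a + b) = C q a * C q b + (q - 4) / (4 * q) * (D q a * D q b) := by
  have hs : √q ^ 2 = q := Real.sq_sqrt hq.le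
  simp only [_root_.C, D, T_add, eval_add, eval_mul, eval_sub, eval_pow, eval_X, eval_one]
  field_simp
  linear_combination (16 * (U ℝ (a - 1)).eval (√q / 2) * (U ℝ (b - 1)).eval (√q / 2)) * hs

lemma C_sub {q : ℝ} (hq : 0 < q) (a b : ℤ) :
    C q (a - b) = C q a * C q b - (q - 4) / (4 * q) * (D q a * D q b) := by
  rw [sub_eq_add_neg, C_add hq, D_neg]
  simp only [_root_.C, T_neg]
  ring

lemma one_le_U_eval {x : ℝ} (hx : 1 ≤ x) (n : ℕ) : 1 ≤ (U ℝ n).eval x := by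
  suffices ∀ n : ℕ, 1 ≤ (U ℝ n).eval x ∧ (U ℝ n).eval x ≤ (U ℝ (n + 1)).eval x from (this n).1
  intro n
  induction n with
  | zero =>
    simp only [Nat.cast_zero, zero_add, U_zero, U_one, eval_one, eval_mul, eval_ofNat, eval_X]
    constructor <;> linarith
  | succ n ih =>
    have h := U_add_two ℝ n
    push_cast
    rw [add_assoc, one_add_one_eq_two, h]
    simp only [eval_sub, eval_mul, eval_ofNat, eval_X]
    constructor <;> nlinarith

lemma D_pos {q : ℝ} (hq : 4 ≤ q) {k : ℤ} (hk : 1 ≤ k) : 0 < D q k := by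
  have h2 : 2 ≤ √q := Real.le_sqrt_of_sq_le (by linarith)
  lift k - 1 to ℕ using (by omega) with m hm
  rw [D, ← hm]
  exact mul_pos (by linarith) (by linarith [one_le_U_eval (x := √q / 2) (by linarith) m])

namespace List

variable {α : Type*}

theorem eraseIdx_eraseIdx_of_le (l : List α) {i j : ℕ} (h : i ≤ j) :
    (l.eraseIdx i).eraseIdx j = (l.eraseIdx (j + 1)).eraseIdx i := by
  induction l generalizing i j with
  | nil => simp
  | cons a l ih =>
    cases i with
    | zero => simp
    | succ i =>
      cases j with
      | zero => omega
      | succ j => simp [ih (Nat.le_of_succ_le_succ h)]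

theorem exists_eraseIdx_eq_append_cons_cons_of_not_isChain {R : α → α → Prop} {l : List α}
    (hl : l.IsChain R) {i : ℕ} (h : ¬ (l.eraseIdx i).IsChain R) :
    ∃ s b c t, l.eraseIdx i = s ++ b :: c :: t ∧ ¬ R b c ∧ s.length + 1 = i := by
  rw [eraseIdx_eq_take_drop_succ, isChain_append] at h
  simp only [hl.take, hl.drop, true_and, not_forall] at h
  obtain ⟨b, hb, c, hc, hbc⟩ := h
  obtain ⟨s, hs⟩ := getLast?_eq_some_iff.1 hb
  obtain ⟨t, ht⟩ := head?_eq_some_iff.1 hc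
  refine ⟨s, b, c, t, by rw [eraseIdx_eq_take_drop_succ, hs, ht]; simp, hbc, ?_⟩
  have hs' := congrArg length hs
  have ht' := congrArg length ht
  simp only [length_take, length_append, length_drop, length_cons, length_nil] at hs' ht'
  omega

theorem eraseIdx_append_cons_cons_length (a : α) (s t : List α) :
    (s ++ a :: a :: t).eraseIdx s.length = s ++ a :: t := by
  simp [eraseIdx_append_of_length_le]

theorem eraseIdx_append_cons_cons_length_add_one (a : α) (s t : List α) :
    (s ++ a :: a :: t).eraseIdx (s.length + 1) = s ++ a :: t := by
  simp [eraseIdx_append_of_length_le]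

theorem not_isChain_ne_eraseIdx_append_cons_cons (a : α) (s t : List α) {j : ℕ}
    (h₁ : j ≠ s.length) (h₂ : j ≠ s.length + 1) :
    ¬ ((s ++ a :: a :: t).eraseIdx j).IsChain (· ≠ ·) := by
  rcases lt_or_gt_of_ne h₁ with h | h
  · simp [eraseIdx_append_of_lt_length h]
  · obtain ⟨k, rfl⟩ : ∃ k, j = s.length + (k + 2) := ⟨j - s.length - 2, by omega⟩
    simp [eraseIdx_append_of_length_le]

end List

theorem sum_range_sum_range_eraseIdx_eraseIdx_eq_zero {α M : Type*} [AddCommGroup M]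
    (l : List α) (n : ℕ) (F : ℤ → List α → M) (hF : ∀ z w, F (-z) w = -F z w) :
    ∑ i ∈ range n, ∑ j ∈ range (n - 1),
      F (2 * j - 2 * i + 1) ((l.eraseIdx i).eraseIdx j) = 0 := by
  rw [← sum_product']
  -- `(i, j)` is sent to the pair of indices deleting the same two letters of `l` in the other order
  refine sum_involution (fun p _ => if p.1 ≤ p.2 then (p.2 + 1, p.1) else (p.2, p.1 - 1))
    ?_ ?_ ?_ ?_
  · rintro ⟨i, j⟩ -
    dsimp only
    split_ifs with h <;> dsimp only
    · rw [show 2 * (i : ℤ) - 2 * ((j + 1 : ℕ) : ℤ) + 1 = -(2 * j - 2 * i + 1) by push_cast; ring,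
        hF, l.eraseIdx_eraseIdx_of_le h, add_neg_cancel]
    · have hji : j ≤ i - 1 := by omega
      rw [show 2 * ((i - 1 : ℕ) : ℤ) - 2 * (j : ℤ) + 1 = -(2 * j - 2 * i + 1) by omega,
        hF, l.eraseIdx_eraseIdx_of_le hji, Nat.sub_add_cancel (by omega), add_neg_cancel]
  · rintro ⟨i, j⟩ - -
    split_ifs <;> simp only [ne_eq, Prod.mk.injEq] <;> omega
  · rintro ⟨i, j⟩ hp
    simp only [mem_product, mem_range] at hp
    split_ifs <;> simp only [mem_product, mem_range] <;> omega
  · rintro ⟨i, j⟩ hp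
    simp only [mem_product, mem_range] at hp
    dsimp only
    split_ifs with h₁ h₂ h₂ <;> simp only [Prod.mk.injEq, true_and, and_true] at h₂ ⊢ <;> omega

section DeletionSum

variable {q : ℕ}

lemma P_of_not_proper {x : List (Fin q)} (hx : ¬ Proper x) : P q x = 0 := by
  cases x with
  | nil => exact absurd List.isChain_nil hx
  | cons a l => rw [P, if_neg hx]

/-- With the paper's 1-based index `i`, the weight of `P (x̂ᵢ)` is `f (n - 2i + 1)`. -/
noncomputable def deletionSum (q : ℕ) (f : ℤ → ℝ) (x : List (Fin q)) : ℝ :=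
  ∑ i ∈ range x.length, f (x.length - 2 * i - 1) * P q (x.eraseIdx i)

lemma P_of_proper {x : List (Fin q)} (hx : Proper x) (hne : x ≠ []) :
    P q x = 1 / D q (x.length + 1) * deletionSum q (C q) x := by
  cases x with
  | nil => exact absurd rfl hne
  | cons a l => rw [P, if_pos hx, deletionSum, ← Fin.sum_univ_eq_sum_range]

lemma deletionSum_eq_sum_fin (f : ℤ → ℝ) (x : List (Fin q)) :
    deletionSum q f x = ∑ i : Fin x.length, f (x.length - 2 * i - 1) * P q (x.eraseIdx i) :=
  (Fin.sum_univ_eq_sum_range (fun i => f (x.length - 2 * i - 1) * P q (x.eraseIdx i)) _).symm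

lemma deletionSum_sub (f g : ℤ → ℝ) (x : List (Fin q)) :
    deletionSum q (fun k => f k - g k) x = deletionSum q f x - deletionSum q g x := by
  simp only [deletionSum, sub_mul, sum_sub_distrib]

lemma deletionSum_add (f g : ℤ → ℝ) (x : List (Fin q)) :
    deletionSum q (fun k => f k + g k) x = deletionSum q f x + deletionSum q g x := by
  simp only [deletionSum, add_mul, sum_add_distrib]

lemma deletionSum_const_mul (c : ℝ) (f : ℤ → ℝ) (x : List (Fin q)) :
    deletionSum q (fun k => c * f k) x = c * deletionSum q f x := by
  simp only [deletionSum, mul_assoc, mul_sum]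

lemma deletionSum_append_cons_cons (f : ℤ → ℝ) (s t : List (Fin q)) (a : Fin q) :
    deletionSum q f (s ++ a :: a :: t)
      = (f (t.length - s.length + 1) + f (t.length - s.length - 1)) * P q (s ++ a :: t) := by
  have hsub : {s.length, s.length + 1} ⊆ range (s ++ a :: a :: t).length := by
    intro j
    simp only [mem_insert, mem_singleton, mem_range, List.length_append, List.length_cons]
    omega
  rw [deletionSum, ← sum_subset hsub, sum_pair (by omega), List.eraseIdx_append_cons_cons_length,
    List.eraseIdx_append_cons_cons_length_add_one, add_mul]
  · simp only [List.length_append, List.length_cons]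
    congr 3 <;> push_cast <;> ring
  · intro j _ hj
    simp only [mem_insert, mem_singleton, not_or] at hj
    rw [P_of_not_proper (List.not_isChain_ne_eraseIdx_append_cons_cons a s t hj.1 hj.2), mul_zero]

lemma deletionSum_D_sub (a : ℤ) (x : List (Fin q)) :
    deletionSum q (fun k => D q (a - k)) x
      = D q a * deletionSum q (C q) x - C q a * deletionSum q (D q) x := by
  simp only [D_sub (q : ℝ) a]
  rw [deletionSum_sub, deletionSum_const_mul, deletionSum_const_mul]

lemma deletionSum_C_sub (hq : 0 < q) (a : ℤ) (x : List (Fin q)) :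
    deletionSum q (fun k => C q (a - k)) x = C q a * deletionSum q (C q) x
      - (q - 4) / (4 * q) * D q a * deletionSum q (D q) x := by
  simp only [C_sub (Nat.cast_pos.2 hq) a, ← mul_assoc]
  rw [deletionSum_sub, deletionSum_const_mul, deletionSum_const_mul]

lemma deletionSum_C_add (hq : 0 < q) (a : ℤ) (x : List (Fin q)) :
    deletionSum q (fun k => C q (a + k)) x = C q a * deletionSum q (C q) x
      + (q - 4) / (4 * q) * D q a * deletionSum q (D q) x := by
  simp only [C_add (Nat.cast_pos.2 hq) a, ← mul_assoc]
  rw [deletionSum_add, deletionSum_const_mul, deletionSum_const_mul]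

lemma deletionSum_C_of_proper {x : List (Fin q)} (hx : Proper x) (hne : x ≠ [])
    (hD : D q (x.length + 1) ≠ 0) : deletionSum q (C q) x = D q (x.length + 1) * P q x := by
  rw [P_of_proper hx hne]
  field_simp

lemma sum_D_mul_P_eraseIdx_eraseIdx (hq : 4 ≤ q) {x : List (Fin q)} (hx : Proper x)
    (hn : 2 ≤ x.length) {i : ℕ} (hi : i < x.length)
    (ih : Proper (x.eraseIdx i) → deletionSum q (D q) (x.eraseIdx i) = 0) :
    ∑ j ∈ range (x.length - 1), D q (2 * j - 2 * i + 1) * P q ((x.eraseIdx i).eraseIdx j)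
      = D q x.length * (D q (x.length - 2 * i - 1) * P q (x.eraseIdx i)) := by
  set y := x.eraseIdx i
  have hy : y.length = x.length - 1 := List.length_eraseIdx_of_lt hi
  have hsum : ∑ j ∈ range (x.length - 1), D q (2 * j - 2 * i + 1) * P q (y.eraseIdx j)
      = deletionSum q (fun k => D q (x.length - 2 * i - 1 - k)) y := by
    rw [deletionSum, hy]
    refine sum_congr rfl fun j _ => ?_
    push_cast [Nat.cast_sub (by omega : 1 ≤ x.length)]
    ring_nf
  rw [hsum]
  by_cases hyp : Proper y
  · have hD : D q (y.length + 1) ≠ 0 := (D_pos (by exact_mod_cast hq) (by omega)).ne'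
    rw [deletionSum_D_sub, ih hyp,
      deletionSum_C_of_proper hyp (List.ne_nil_of_length_pos (by omega)) hD,
      hy, Nat.cast_sub (by omega : 1 ≤ x.length)]
    push_cast
    ring_nf
  · obtain ⟨s, a, b, t, hst, hab, hs⟩ :=
      List.exists_eraseIdx_eq_append_cons_cons_of_not_isChain hx hyp
    rw [not_not] at hab
    subst hab
    replace hst : y = s ++ a :: a :: t := hst
    have hlen := congrArg List.length hst
    simp only [List.length_append, List.length_cons, hy] at hlen
    rw [P_of_not_proper hyp, hst, deletionSum_append_cons_cons,
      show (x.length : ℤ) - 2 * i - 1 - (t.length - s.length + 1) = -1 by omega,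
      show (x.length : ℤ) - 2 * i - 1 - (t.length - s.length - 1) = 1 by omega, D_neg]
    ring

theorem deletionSum_D_eq_zero (hq : 4 ≤ q) {x : List (Fin q)} (hx : Proper x) :
    deletionSum q (D q) x = 0 := by
  induction hn : x.length using Nat.strong_induction_on generalizing x with
  | _ n ih =>
  rcases lt_or_ge n 2 with hn2 | hn2
  · interval_cases n <;> simp [deletionSum, hn, D_zero]
  · have hDn : D q n ≠ 0 := (D_pos (by exact_mod_cast hq) (by omega)).ne'
    refine (mul_eq_zero.1 ?_).resolve_left hDn
    rw [deletionSum, mul_sum, hn, ← sum_range_sum_range_eraseIdx_eraseIdx_eq_zero x n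
      (fun z w => D q z * P q w) (fun z w => by rw [D_neg, neg_mul])]
    refine sum_congr rfl fun i hi => ?_
    have hi : i < x.length := hn ▸ mem_range.1 hi
    rw [← hn]
    exact (sum_D_mul_P_eraseIdx_eraseIdx hq hx (by omega) hi fun hy =>
      ih _ (by omega) hy (List.length_eraseIdx_of_lt hi)).symm

end DeletionSum

theorem Q_eq_Qstar_eq (q : ℕ) (hq : 4 ≤ q) (x : List (Fin q)) (hx : Proper x)
    (hn : 1 ≤ x.length) :
    (1 / D q ((x.length : ℤ) + 1)) *
        ∑ i : Fin x.length, C q (2 * (i : ℤ) + 2) * P q (x.eraseIdx i)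
      = (1 / D q ((x.length : ℤ) + 1)) *
        ∑ i : Fin x.length, C q (2 * (x.length : ℤ) - 2 * (i : ℤ)) * P q (x.eraseIdx i) ∧
    (1 / D q ((x.length : ℤ) + 1)) *
        ∑ i : Fin x.length, C q (2 * (i : ℤ) + 2) * P q (x.eraseIdx i)
      = P q x * C q ((x.length : ℤ) + 1) := by
  have hq0 : 0 < q := by omega
  have hR := deletionSum_D_eq_zero hq hx
  have hQ : ∑ i : Fin x.length, C q (2 * (i : ℤ) + 2) * P q (x.eraseIdx i)
      = C q (x.length + 1) * deletionSum q (C q) x := by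
    calc _ = deletionSum q (fun k => C q (x.length + 1 - k)) x := by
          rw [deletionSum_eq_sum_fin]; ring_nf
      _ = _ := by rw [deletionSum_C_sub hq0, hR]; ring
  have hQstar : ∑ i : Fin x.length, C q (2 * (x.length : ℤ) - 2 * (i : ℤ)) * P q (x.eraseIdx i)
      = C q (x.length + 1) * deletionSum q (C q) x := by
    calc _ = deletionSum q (fun k => C q (x.length + 1 + k)) x := by
          rw [deletionSum_eq_sum_fin]; ring_nf
      _ = _ := by rw [deletionSum_C_add hq0, hR]; ring
  rw [hQ, hQstar, P_of_proper hx (List.ne_nil_of_length_pos hn)]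
  exact ⟨rfl, by ring⟩
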